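/- arXiv:2312.03724 — 7 statements merged into one kernel-verified Lean document; each statement's English description precedes it below -/
import Mathlib

section
/- If a mechanism M satisfies (ε, 0)-differential privacy, then it satisfies (α, αε²/2)-Rényi differential privacy for every order α > 1; in fact it satisfies the stronger bound D_α(M(D) ‖ M(D')) ≤ min(αε²/2, ε) for all adjacent D, D'. -/
/-- Rényi divergence of order `α` between discrete distributions `P` and `Q`. -/
noncomputable def renyiDiv {Y : Type*} [Fintype Y] (α : ℝ) (P Q : Y → ℝ) : ℝ :=
  (α - 1)⁻¹ * Real.log (∑ y, Q y * (P y / Q y) ^ α)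

/-!
The privacy loss ratio `r = P / Q` of neighbouring output distributions lies in `[e^{-ε}, e^ε]`
and has `Q`-mean `1`. The bound `ε` follows from `r ^ α ≤ r e^{(α - 1) ε}`. For the bound
`α ε² / 2`, convexity of `r ↦ r ^ α` bounds `E_Q[r ^ α]` by the chord through `e^{-ε}` and `e^ε`
evaluated at the mean `1`; that value is `cosh ((α - 1/2) ε) / cosh (ε / 2)`, and since
`t ↦ t² / 2 - log (cosh t)` is monotone on `[0, ∞)` (as `tanh t ≤ t`), it is at most
`exp (((α - 1/2)² ε² - ε² / 4) / 2) = exp (α (α - 1) ε² / 2)`.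
-/

open Real Finset Set

lemma Real.sinh_le_mul_cosh {t : ℝ} (ht : 0 ≤ t) : sinh t ≤ t * cosh t := by
  rcases ht.eq_or_lt with rfl | ht
  · simp
  obtain ⟨c, hc, hslope⟩ := exists_deriv_eq_slope sinh ht continuous_sinh.continuousOn
    differentiable_sinh.differentiableOn
  rw [deriv_sinh, sinh_zero, sub_zero, sub_zero, eq_div_iff ht.ne'] at hslope
  rw [← hslope, mul_comm]
  gcongr
  exact cosh_le_cosh.2 (by rw [abs_of_pos hc.1, abs_of_pos ht]; exact hc.2.le)

lemma Real.cosh_le_cosh_mul_exp {x y : ℝ} (hy : 0 ≤ y) (hyx : y ≤ x) :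
    cosh x ≤ cosh y * exp ((x ^ 2 - y ^ 2) / 2) := by
  have hmono : MonotoneOn (fun t ↦ t ^ 2 / 2 - log (cosh t)) (Ici 0) := by
    have hderiv (t : ℝ) : HasDerivAt (fun t ↦ t ^ 2 / 2 - log (cosh t))
        (t - sinh t / cosh t) t := by
      refine (((hasDerivAt_pow 2 t).div_const 2).sub
        ((hasDerivAt_cosh t).log (cosh_pos t).ne')).congr_deriv ?_
      norm_num
    refine monotoneOn_of_hasDerivWithinAt_nonneg (convex_Ici 0)
      (fun t _ ↦ (hderiv t).continuousAt.continuousWithinAt)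
      (fun t _ ↦ (hderiv t).hasDerivWithinAt) fun t ht ↦ ?_
    rw [interior_Ici] at ht
    rw [sub_nonneg, div_le_iff₀ (cosh_pos t)]
    exact sinh_le_mul_cosh ht.le
  have hlog := hmono (mem_Ici.2 hy) (mem_Ici.2 (hy.trans hyx)) hyx
  rw [← log_le_log_iff (cosh_pos x) (by positivity), log_mul (cosh_pos y).ne' (exp_pos _).ne',
    log_exp]
  linarith

lemma exp_chord_eq_cosh_div_cosh {ε : ℝ} (hε : 0 < ε) (α : ℝ) :
    ((exp ε - 1) * exp (-ε) ^ α + (1 - exp (-ε)) * exp ε ^ α) / (exp ε - exp (-ε)) =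
      cosh ((α - 1 / 2) * ε) / cosh (ε / 2) := by
  have hA : exp ε = exp (ε / 2) ^ 2 := by rw [← exp_nat_mul]; ring_nf
  have hAB : exp ε ^ α = exp (ε / 2) * exp ((α - 1 / 2) * ε) := by
    rw [← exp_mul, ← exp_add]; ring_nf
  have hAB' : exp (-ε) ^ α = (exp (ε / 2) * exp ((α - 1 / 2) * ε))⁻¹ := by
    rw [← exp_mul, ← hAB, ← exp_mul, ← exp_neg]; ring_nf
  rw [hAB', hAB, exp_neg ε, hA, cosh_eq, cosh_eq, exp_neg, exp_neg]
  have hA1 : 1 < exp (ε / 2) := one_lt_exp_iff.2 (by positivity)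
  have hB := exp_pos ((α - 1 / 2) * ε)
  generalize exp (ε / 2) = A at hA1 ⊢
  generalize exp ((α - 1 / 2) * ε) = B at hB ⊢
  have hA2 : 1 < A ^ 2 := one_lt_pow₀ hA1 two_ne_zero
  have hden : A ^ 2 - (A ^ 2)⁻¹ ≠ 0 := (sub_pos.2 ((inv_lt_one_of_one_lt₀ hA2).trans hA2)).ne'
  rw [div_eq_div_iff hden (by positivity)]
  field_simp
  ring

lemma exp_chord_le_exp_sq {ε α : ℝ} (hε : 0 < ε) (hα : 1 ≤ α) :
    ((exp ε - 1) * exp (-ε) ^ α + (1 - exp (-ε)) * exp ε ^ α) / (exp ε - exp (-ε)) ≤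
      exp (α * (α - 1) * ε ^ 2 / 2) := by
  rw [exp_chord_eq_cosh_div_cosh hε, div_le_iff₀ (cosh_pos _)]
  calc cosh ((α - 1 / 2) * ε)
      ≤ cosh (ε / 2) * exp ((((α - 1 / 2) * ε) ^ 2 - (ε / 2) ^ 2) / 2) :=
        cosh_le_cosh_mul_exp (by positivity) (by nlinarith)
    _ = exp (α * (α - 1) * ε ^ 2 / 2) * cosh (ε / 2) := by ring_nf

lemma ConvexOn.mul_le_chord {s : Set ℝ} {f : ℝ → ℝ} (hf : ConvexOn ℝ s f) {a b x : ℝ}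
    (ha : a ∈ s) (hb : b ∈ s) (hx : x ∈ Icc a b) :
    (b - a) * f x ≤ (b - x) * f a + (x - a) * f b := by
  rcases (hx.1.trans hx.2).eq_or_lt with rfl | hab
  · obtain rfl : x = a := le_antisymm hx.2 hx.1
    simp
  have hba : 0 < b - a := sub_pos.2 hab
  have hcomb : (b - x) / (b - a) * a + (x - a) / (b - a) * b = x := by
    field_simp
    ring
  have h := hf.2 ha hb (div_nonneg (sub_nonneg.2 hx.2) hba.le)
    (div_nonneg (sub_nonneg.2 hx.1) hba.le) (by field_simp; ring)
  simp only [smul_eq_mul, hcomb] at h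
  rw [← le_div_iff₀' hba]
  convert h using 1
  field_simp

lemma ConvexOn.sum_mul_le_chord {s : Set ℝ} {f : ℝ → ℝ} (hf : ConvexOn ℝ s f) {a b : ℝ}
    (ha : a ∈ s) (hb : b ∈ s) {ι : Type*} (t : Finset ι) {w x : ι → ℝ}
    (hw : ∀ i ∈ t, 0 ≤ w i) (hx : ∀ i ∈ t, x i ∈ Icc a b) :
    (b - a) * ∑ i ∈ t, w i * f (x i) ≤
      (b * ∑ i ∈ t, w i - ∑ i ∈ t, w i * x i) * f a +
        (∑ i ∈ t, w i * x i - a * ∑ i ∈ t, w i) * f b := by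
  calc (b - a) * ∑ i ∈ t, w i * f (x i)
      = ∑ i ∈ t, w i * ((b - a) * f (x i)) := by rw [mul_sum]; ring_nf
    _ ≤ ∑ i ∈ t, w i * ((b - x i) * f a + (x i - a) * f b) :=
        sum_le_sum fun i hi ↦ mul_le_mul_of_nonneg_left (hf.mul_le_chord ha hb (hx i hi)) (hw i hi)
    _ = _ := by
        simp only [mul_sum, sum_mul, ← sum_sub_distrib, ← sum_add_distrib]
        exact sum_congr rfl fun i _ ↦ by ring

section Renyi

variable {Y : Type*} [Fintype Y] {P Q : Y → ℝ}

lemma renyiDiv_le_of_sum_le_exp {α c : ℝ} (hα : 1 < α)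
    (hpos : 0 < ∑ y, Q y * (P y / Q y) ^ α)
    (hle : ∑ y, Q y * (P y / Q y) ^ α ≤ exp ((α - 1) * c)) :
    renyiDiv α P Q ≤ c := by
  rw [renyiDiv, inv_mul_le_iff₀ (sub_pos.2 hα), ← log_exp ((α - 1) * c)]
  exact log_le_log hpos hle

lemma sum_mul_div_rpow_pos (hP : ∀ y, 0 < P y) (hQ : ∀ y, 0 < Q y) (hP1 : ∑ y, P y = 1)
    (α : ℝ) : 0 < ∑ y, Q y * (P y / Q y) ^ α :=
  sum_pos (fun y _ ↦ mul_pos (hQ y) (rpow_pos_of_pos (div_pos (hP y) (hQ y)) α))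
    (Finset.nonempty_of_sum_ne_zero (hP1 ▸ one_ne_zero))

lemma sum_mul_div_rpow_le_exp {α ε : ℝ} (hα : 1 ≤ α) (hP : ∀ y, 0 < P y)
    (hQ : ∀ y, 0 < Q y) (hP1 : ∑ y, P y = 1) (hratio : ∀ y, P y / Q y ≤ exp ε) :
    ∑ y, Q y * (P y / Q y) ^ α ≤ exp ((α - 1) * ε) := by
  calc ∑ y, Q y * (P y / Q y) ^ α
      = ∑ y, P y * (P y / Q y) ^ (α - 1) := sum_congr rfl fun y _ ↦ by
        rw [rpow_sub_one (div_pos (hP y) (hQ y)).ne']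
        field_simp [(hP y).ne', (hQ y).ne']
    _ ≤ ∑ y, P y * exp ε ^ (α - 1) := sum_le_sum fun y _ ↦
        mul_le_mul_of_nonneg_left
          (rpow_le_rpow (div_pos (hP y) (hQ y)).le (hratio y) (sub_nonneg.2 hα)) (hP y).le
    _ = exp ((α - 1) * ε) := by rw [← sum_mul, hP1, one_mul, ← exp_mul, mul_comm]

lemma sum_mul_div_rpow_le_exp_sq {α ε : ℝ} (hα : 1 ≤ α) (hε : 0 < ε)
    (hQ : ∀ y, 0 < Q y) (hP1 : ∑ y, P y = 1) (hQ1 : ∑ y, Q y = 1)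
    (hratio : ∀ y, P y / Q y ∈ Icc (exp (-ε)) (exp ε)) :
    ∑ y, Q y * (P y / Q y) ^ α ≤ exp (α * (α - 1) * ε ^ 2 / 2) := by
  have hmean : ∑ y, Q y * (P y / Q y) = 1 := by
    rw [← hP1]
    exact sum_congr rfl fun y _ ↦ mul_div_cancel₀ _ (hQ y).ne'
  have hchord := (convexOn_rpow hα).sum_mul_le_chord (exp_pos (-ε)).le (exp_pos ε).le univ
    (fun y _ ↦ (hQ y).le) (fun y _ ↦ hratio y)
  rw [hmean, hQ1, mul_one, mul_one] at hchord
  refine le_trans ?_ (exp_chord_le_exp_sq hε hα)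
  exact (le_div_iff₀' (sub_pos.2 (exp_lt_exp.2 (neg_lt_self hε)))).2 hchord

end Renyi

/-- If `M` is `(ε,0)`-DP then it is `(α, min(αε²/2, ε))`-RDP for every `α > 1`. -/
theorem stmt_1 {T Y : Type*} [Fintype Y]
    (Adj : T → T → Prop) (hsymm : Symmetric Adj)
    (M : T → Y → ℝ) (ε : ℝ) (hε : 0 ≤ ε)
    (hpos : ∀ D y, 0 < M D y)
    (hpmf : ∀ D, ∑ y, M D y = 1)
    (hDP : ∀ D D', Adj D D' → ∀ E : Finset Y,
      ∑ y ∈ E, M D y ≤ Real.exp ε * ∑ y ∈ E, M D' y) :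
    ∀ α : ℝ, 1 < α → ∀ D D', Adj D D' →
      renyiDiv α (M D) (M D') ≤ min (α * ε ^ 2 / 2) ε := by
  intro α hα D D' hadj
  have hratio {D D' : T} (h : Adj D D') (y : Y) : M D y / M D' y ≤ exp ε := by
    simpa [div_le_iff₀ (hpos D' y), mul_comm] using hDP D D' h {y}
  have hratio' (y : Y) : exp (-ε) ≤ M D y / M D' y := by
    rw [exp_neg, ← inv_div]
    exact inv_anti₀ (div_pos (hpos D' y) (hpos D y)) (hratio (hsymm hadj) y)
  have hsum_pos := sum_mul_div_rpow_pos (hpos D) (hpos D') (hpmf D) α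
  have hle_eps : renyiDiv α (M D) (M D') ≤ ε := renyiDiv_le_of_sum_le_exp hα hsum_pos
    (sum_mul_div_rpow_le_exp hα.le (hpos D) (hpos D') (hpmf D) (hratio hadj))
  refine le_min ?_ hle_eps
  rcases hε.eq_or_lt with rfl | hε
  · simpa using hle_eps
  · refine renyiDiv_le_of_sum_le_exp hα hsum_pos ((sum_mul_div_rpow_le_exp_sq hα.le hε (hpos D')
      (hpmf D) (hpmf D') fun y ↦ ⟨hratio' y, hratio hadj y⟩).trans_eq ?_)
    ring_nf
end

section
/- The exponential mechanism EM_q, which outputs y ∈ Y with probability proportional to exp(ε q(D,y) / (2 Δ(q))), satisfies ε-differential privacy. -/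
/-- The exponential mechanism, which outputs `y` with probability proportional to
`exp(ε q(D,y) / (2Δ))` where `Δ` bounds the sensitivity of `q`, is `ε`-DP. -/
theorem stmt_2 {T Y : Type*} [Fintype Y] [Nonempty Y]
    (Adj : T → T → Prop) (hsymm : Symmetric Adj)
    (q : T → Y → ℝ) (ε Δ : ℝ) (hε : 0 < ε) (hΔ : 0 < Δ)
    (hsens : ∀ D D', Adj D D' → ∀ y, |q D y - q D' y| ≤ Δ)
    (EM : T → Y → ℝ)
    (hEM : ∀ D y, EM D y =
      Real.exp (ε * q D y / (2 * Δ)) / ∑ y', Real.exp (ε * q D y' / (2 * Δ))) :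
    ∀ D D', Adj D D' → ∀ E : Finset Y,
      ∑ y ∈ E, EM D y ≤ Real.exp ε * ∑ y ∈ E, EM D' y := by
  intro D D' hadj E
  have h2Δ : (0:ℝ) < 2 * Δ := by linarith
  -- pointwise bound on exponents
  have hnum : ∀ y, Real.exp (ε * q D y / (2 * Δ)) ≤
      Real.exp (ε / 2) * Real.exp (ε * q D' y / (2 * Δ)) := by
    intro y
    rw [← Real.exp_add, Real.exp_le_exp]
    have h := (abs_le.mp (hsens D D' hadj y)).2
    rw [div_le_iff₀ h2Δ, add_mul, div_mul_cancel₀ _ h2Δ.ne']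
    nlinarith [mul_le_mul_of_nonneg_left h hε.le]
  have hden : (∑ y', Real.exp (ε * q D' y' / (2 * Δ))) ≤
      Real.exp (ε / 2) * ∑ y', Real.exp (ε * q D y' / (2 * Δ)) := by
    rw [Finset.mul_sum]
    apply Finset.sum_le_sum
    intro y _
    rw [← Real.exp_add, Real.exp_le_exp]
    have h := (abs_le.mp (hsens D D' hadj y)).1
    rw [div_le_iff₀ h2Δ, add_mul, div_mul_cancel₀ _ h2Δ.ne']
    nlinarith [mul_le_mul_of_nonneg_left h hε.le]
  have hSpos : (0:ℝ) < ∑ y', Real.exp (ε * q D y' / (2 * Δ)) :=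
    Finset.sum_pos (fun y _ => Real.exp_pos _) Finset.univ_nonempty
  have hS'pos : (0:ℝ) < ∑ y', Real.exp (ε * q D' y' / (2 * Δ)) :=
    Finset.sum_pos (fun y _ => Real.exp_pos _) Finset.univ_nonempty
  rw [Finset.mul_sum]
  apply Finset.sum_le_sum
  intro y _
  rw [hEM, hEM, ← mul_div_assoc, div_le_div_iff₀ hSpos hS'pos]
  calc Real.exp (ε * q D y / (2 * Δ)) * ∑ y', Real.exp (ε * q D' y' / (2 * Δ))
      ≤ (Real.exp (ε / 2) * Real.exp (ε * q D' y / (2 * Δ))) *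
        (Real.exp (ε / 2) * ∑ y', Real.exp (ε * q D y' / (2 * Δ))) := by
        apply mul_le_mul (hnum y) hden hS'pos.le
        positivity
    _ = Real.exp ε * Real.exp (ε * q D' y / (2 * Δ)) * ∑ y', Real.exp (ε * q D y' / (2 * Δ)) := by
        rw [mul_mul_mul_comm, ← Real.exp_add, show ε/2 + ε/2 = ε by ring, mul_assoc]
end

section
/- If the utility function q is monotonic in the dataset (adding a data record never decreases q(·, y) for any outcome y, or never increases it for any outcome y), then the exponential mechanism with probabilities proportional to exp(ε q(D,y)/(2Δ(q))) satisfies (ε/2)-differential privacy. -/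
/-- Key pointwise lemma: if `f ≤ g ≤ C·f` pointwise (all positive), then the normalized
versions satisfy two-sided `C`-bounds. -/
lemma exp_mech_aux {Y : Type*} [Fintype Y] [Nonempty Y] (f g : Y → ℝ) (C : ℝ)
    (hf : ∀ y, 0 < f y) (hg : ∀ y, 0 < g y) (hC : 0 < C)
    (h1 : ∀ y, f y ≤ g y) (h2 : ∀ y, g y ≤ C * f y) (y : Y) :
    f y / (∑ y', f y') ≤ C * (g y / ∑ y', g y') ∧
    g y / (∑ y', g y') ≤ C * (f y / ∑ y', f y') := by
  have hFs : 0 < ∑ y', f y' := Finset.sum_pos (fun y _ => hf y) Finset.univ_nonempty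
  have hGs : 0 < ∑ y', g y' := Finset.sum_pos (fun y _ => hg y) Finset.univ_nonempty
  have hGF : (∑ y', g y') ≤ C * ∑ y', f y' := by
    rw [Finset.mul_sum]; exact Finset.sum_le_sum fun y _ => h2 y
  have hFG : (∑ y', f y') ≤ ∑ y', g y' := Finset.sum_le_sum fun y _ => h1 y
  constructor
  · rw [← mul_div_assoc, div_le_div_iff₀ hFs hGs]
    calc f y * ∑ y', g y' ≤ g y * (C * ∑ y', f y') :=
          mul_le_mul (h1 y) hGF (le_of_lt hGs) (le_of_lt (hg y))
      _ = C * g y * ∑ y', f y' := by ring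
  · rw [← mul_div_assoc, div_le_div_iff₀ hGs hFs]
    calc g y * ∑ y', f y' ≤ (C * f y) * ∑ y', g y' :=
          mul_le_mul (h2 y) hFG (le_of_lt hFs) (mul_pos hC (hf y)).le
      _ = C * f y * ∑ y', g y' := by ring

/-- If the utility function is monotonic in the dataset, the exponential mechanism with
probabilities proportional to `exp(ε q(D,y)/(2Δ))` satisfies `(ε/2)`-DP, where adjacency
means adding one record to a multiset dataset. -/
theorem stmt_3 {X Y : Type*} [Fintype Y] [Nonempty Y]
    (q : Multiset X → Y → ℝ) (ε Δ : ℝ) (hε : 0 < ε) (hΔ : 0 < Δ)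
    (hsens : ∀ (D : Multiset X) (x : X) (y : Y), |q (x ::ₘ D) y - q D y| ≤ Δ)
    (hmono : (∀ (D : Multiset X) (x : X) (y : Y), q D y ≤ q (x ::ₘ D) y) ∨
             (∀ (D : Multiset X) (x : X) (y : Y), q (x ::ₘ D) y ≤ q D y))
    (EM : Multiset X → Y → ℝ)
    (hEM : ∀ D y, EM D y =
      Real.exp (ε * q D y / (2 * Δ)) / ∑ y', Real.exp (ε * q D y' / (2 * Δ))) :
    ∀ (D : Multiset X) (x : X) (E : Finset Y),
      (∑ y ∈ E, EM D y ≤ Real.exp (ε / 2) * ∑ y ∈ E, EM (x ::ₘ D) y) ∧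
      (∑ y ∈ E, EM (x ::ₘ D) y ≤ Real.exp (ε / 2) * ∑ y ∈ E, EM D y) := by
  intro D x E
  set f : Y → ℝ := fun y => Real.exp (ε * q D y / (2 * Δ)) with hfdef
  set g : Y → ℝ := fun y => Real.exp (ε * q (x ::ₘ D) y / (2 * Δ)) with hgdef
  have hC : (0:ℝ) < Real.exp (ε / 2) := Real.exp_pos _
  have h2Δ : (0:ℝ) < 2 * Δ := by linarith
  -- helper: if a ≤ b ≤ a + Δ then exp(ε b/(2Δ)) ≤ exp(ε/2) exp(ε a/(2Δ))
  have key : ∀ a b : ℝ, b - a ≤ Δ →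
      Real.exp (ε * b / (2 * Δ)) ≤ Real.exp (ε / 2) * Real.exp (ε * a / (2 * Δ)) := by
    intro a b hab
    rw [← Real.exp_add, Real.exp_le_exp]
    have h1 : ε * b ≤ ε * Δ + ε * a := by nlinarith
    have : ε * b / (2 * Δ) ≤ (ε * Δ + ε * a) / (2 * Δ) := by
      exact div_le_div_of_nonneg_right h1 h2Δ.le
    calc ε * b / (2 * Δ) ≤ (ε * Δ + ε * a) / (2 * Δ) := this
      _ = ε / 2 + ε * a / (2 * Δ) := by field_simp
  -- pointwise two sided bounds
  have hpt : ∀ y : Y, EM D y ≤ Real.exp (ε / 2) * EM (x ::ₘ D) y ∧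
      EM (x ::ₘ D) y ≤ Real.exp (ε / 2) * EM D y := by
    intro y
    rw [hEM D y, hEM (x ::ₘ D) y]
    rcases hmono with hm | hm
    · exact exp_mech_aux f g _ (fun y => Real.exp_pos _) (fun y => Real.exp_pos _) hC
        (fun y => Real.exp_le_exp.mpr
          (div_le_div_of_nonneg_right (mul_le_mul_of_nonneg_left (hm D x y) hε.le) h2Δ.le))
        (fun y => key _ _ (abs_le.mp (hsens D x y)).2) y
    · exact (exp_mech_aux g f _ (fun y => Real.exp_pos _) (fun y => Real.exp_pos _) hC
        (fun y => Real.exp_le_exp.mpr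
          (div_le_div_of_nonneg_right (mul_le_mul_of_nonneg_left (hm D x y) hε.le) h2Δ.le))
        (fun y => key _ _ (by have := abs_le.mp (hsens D x y); linarith [this.1])) y).symm
  constructor
  · calc ∑ y ∈ E, EM D y ≤ ∑ y ∈ E, Real.exp (ε / 2) * EM (x ::ₘ D) y :=
        Finset.sum_le_sum fun y _ => (hpt y).1
      _ = Real.exp (ε / 2) * ∑ y ∈ E, EM (x ::ₘ D) y := by rw [Finset.mul_sum]
  · calc ∑ y ∈ E, EM (x ::ₘ D) y ≤ ∑ y ∈ E, Real.exp (ε / 2) * EM D y :=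
        Finset.sum_le_sum fun y _ => (hpt y).2
      _ = Real.exp (ε / 2) * ∑ y ∈ E, EM D y := by rw [Finset.mul_sum]
end

section
/- Composition of Rényi DP: if mechanism M₁ is (α, ε₁(α))-RDP and, for every output o of M₁, the mechanism M₂(·, o) is (α, ε₂(α))-RDP, then the adaptive composition (M₁(D), M₂(D, M₁(D))) is (α, ε₁(α) + ε₂(α))-RDP. -/
lemma renyi_sum_pos {Y : Type*} [Fintype Y] [Nonempty Y] (α : ℝ) (P Q : Y → ℝ)
    (hP : ∀ y, 0 < P y) (hQ : ∀ y, 0 < Q y) :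
    0 < ∑ y, Q y * (P y / Q y) ^ α :=
  Finset.sum_pos (fun y _ => mul_pos (hQ y) (Real.rpow_pos_of_pos (div_pos (hP y) (hQ y)) α))
    Finset.univ_nonempty

lemma renyi_sum_le {Y : Type*} [Fintype Y] [Nonempty Y] {α ε : ℝ} (hα : 0 < α - 1)
    (P Q : Y → ℝ) (hP : ∀ y, 0 < P y) (hQ : ∀ y, 0 < Q y)
    (h : renyiDiv α P Q ≤ ε) :
    ∑ y, Q y * (P y / Q y) ^ α ≤ Real.exp ((α - 1) * ε) := by
  have hS := renyi_sum_pos α P Q hP hQ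
  unfold renyiDiv at h
  have hlog : Real.log (∑ y, Q y * (P y / Q y) ^ α) ≤ (α - 1) * ε :=
    (inv_mul_le_iff₀ hα).mp h
  exact (Real.log_le_iff_le_exp hS).mp hlog

/-- Adaptive composition of Rényi DP: if `M₁` is `(α,ε₁)`-RDP and `M₂(·,o)` is `(α,ε₂)`-RDP
for every output `o` of `M₁`, then the composition `(M₁(D), M₂(D, M₁(D)))` is
`(α, ε₁+ε₂)`-RDP. -/
theorem stmt_5 {T Y Z : Type*} [Fintype Y] [Fintype Z]
    (Adj : T → T → Prop) (α ε₁ ε₂ : ℝ) (hα : 1 < α)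
    (M₁ : T → Y → ℝ) (M₂ : T → Y → Z → ℝ)
    (h₁pos : ∀ D y, 0 < M₁ D y) (h₁pmf : ∀ D, ∑ y, M₁ D y = 1)
    (h₂pos : ∀ D o z, 0 < M₂ D o z) (h₂pmf : ∀ D o, ∑ z, M₂ D o z = 1)
    (hRDP₁ : ∀ D D', Adj D D' → renyiDiv α (M₁ D) (M₁ D') ≤ ε₁)
    (hRDP₂ : ∀ (o : Y) (D D' : T), Adj D D' →
      renyiDiv α (fun z => M₂ D o z) (fun z => M₂ D' o z) ≤ ε₂) :
    ∀ D D', Adj D D' →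
      renyiDiv α (fun p : Y × Z => M₁ D p.1 * M₂ D p.1 p.2)
        (fun p : Y × Z => M₁ D' p.1 * M₂ D' p.1 p.2) ≤ ε₁ + ε₂ := by
  intro D D' hAdj
  have hα0 : 0 < α - 1 := by linarith
  have hY : Nonempty Y := by
    by_contra h
    rw [not_nonempty_iff] at h
    have := h₁pmf D
    simp [Finset.sum_of_isEmpty] at this
  have hZ : Nonempty Z := by
    by_contra h
    rw [not_nonempty_iff] at h
    have := h₂pmf D (Classical.arbitrary Y)
    simp [Finset.sum_of_isEmpty] at this
  set E₁ := Real.exp ((α - 1) * ε₁) with hE₁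
  set E₂ := Real.exp ((α - 1) * ε₂) with hE₂
  -- the total sum
  have hsplit : ∀ (y : Y) (z : Z),
      M₁ D' y * M₂ D' y z * (M₁ D y * M₂ D y z / (M₁ D' y * M₂ D' y z)) ^ α
        = (M₁ D' y * (M₁ D y / M₁ D' y) ^ α) * (M₂ D' y z * (M₂ D y z / M₂ D' y z) ^ α) := by
    intro y z
    rw [mul_div_mul_comm, Real.mul_rpow (le_of_lt (div_pos (h₁pos D y) (h₁pos D' y)))
      (le_of_lt (div_pos (h₂pos D y z) (h₂pos D' y z)))]
    ring
  have hbound : ∑ p : Y × Z, (M₁ D' p.1 * M₂ D' p.1 p.2) *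
      ((M₁ D p.1 * M₂ D p.1 p.2) / (M₁ D' p.1 * M₂ D' p.1 p.2)) ^ α ≤ E₁ * E₂ := by
    rw [Fintype.sum_prod_type]
    calc ∑ y, ∑ z, (M₁ D' y * M₂ D' y z) *
          ((M₁ D y * M₂ D y z) / (M₁ D' y * M₂ D' y z)) ^ α
        = ∑ y, (M₁ D' y * (M₁ D y / M₁ D' y) ^ α) *
            ∑ z, (M₂ D' y z * (M₂ D y z / M₂ D' y z) ^ α) := by
          refine Finset.sum_congr rfl fun y _ => ?_
          rw [Finset.mul_sum]
          exact Finset.sum_congr rfl fun z _ => hsplit y z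
      _ ≤ ∑ y, (M₁ D' y * (M₁ D y / M₁ D' y) ^ α) * E₂ := by
          refine Finset.sum_le_sum fun y _ => ?_
          have hpos : 0 ≤ M₁ D' y * (M₁ D y / M₁ D' y) ^ α :=
            le_of_lt (mul_pos (h₁pos D' y)
              (Real.rpow_pos_of_pos (div_pos (h₁pos D y) (h₁pos D' y)) α))
          exact mul_le_mul_of_nonneg_left
            (renyi_sum_le hα0 (fun z => M₂ D y z) (fun z => M₂ D' y z)
              (h₂pos D y) (h₂pos D' y) (hRDP₂ y D D' hAdj)) hpos
      _ = (∑ y, M₁ D' y * (M₁ D y / M₁ D' y) ^ α) * E₂ := by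
          rw [Finset.sum_mul]
      _ ≤ E₁ * E₂ := by
          have := renyi_sum_le hα0 (M₁ D) (M₁ D') (h₁pos D) (h₁pos D') (hRDP₁ D D' hAdj)
          exact mul_le_mul_of_nonneg_right this (le_of_lt (Real.exp_pos _))
  have hSpos : 0 < ∑ p : Y × Z, (M₁ D' p.1 * M₂ D' p.1 p.2) *
      ((M₁ D p.1 * M₂ D p.1 p.2) / (M₁ D' p.1 * M₂ D' p.1 p.2)) ^ α :=
    renyi_sum_pos α _ _ (fun p => mul_pos (h₁pos D p.1) (h₂pos D p.1 p.2))
      (fun p => mul_pos (h₁pos D' p.1) (h₂pos D' p.1 p.2))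
  unfold renyiDiv
  rw [inv_mul_le_iff₀ hα0]
  have hEE : E₁ * E₂ = Real.exp ((α - 1) * (ε₁ + ε₂)) := by
    rw [hE₁, hE₂, ← Real.exp_add]; ring_nf
  calc Real.log (∑ p : Y × Z, (M₁ D' p.1 * M₂ D' p.1 p.2) *
        ((M₁ D p.1 * M₂ D p.1 p.2) / (M₁ D' p.1 * M₂ D' p.1 p.2)) ^ α)
      ≤ Real.log (E₁ * E₂) := Real.log_le_log hSpos hbound
    _ = (α - 1) * (ε₁ + ε₂) := by rw [hEE, Real.log_exp]
end

section
/- RDP-to-DP conversion: if a mechanism M is (α, ε(α))-Rényi differentially private for some α > 1, then for any δ ∈ (0,1), M is (ε(α) + log(1/δ)/(α−1), δ)-differentially private. -/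
/-!
Split an event `E` according to whether the likelihood ratio `P y / Q y` exceeds `e^t`,
with `t = ε + log(1/δ)/(α-1)`. Below the threshold `P ≤ e^t Q` pointwise. Above it,
Markov's inequality for the `(α-1)`-th moment of the ratio under `P`, whose expectation
`∑ Q (P/Q)^α` is at most `e^{(α-1)ε}` by the RDP bound, gives mass at most
`e^{(α-1)(ε-t)} = δ`.
-/

open Real Finset

section

variable {Y : Type*}

lemma sum_le_mul_sum_add_sum_filter_lt (E : Finset Y) {P Q : Y → ℝ} {c : ℝ} (hc : 0 ≤ c)
    (hQ : ∀ y ∈ E, 0 ≤ Q y) :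
    ∑ y ∈ E, P y ≤ c * ∑ y ∈ E, Q y + ∑ y ∈ E with c * Q y < P y, P y := by
  have hbelow : ∑ y ∈ E with ¬c * Q y < P y, P y ≤ c * ∑ y ∈ E, Q y := by
    calc ∑ y ∈ E with ¬c * Q y < P y, P y
        ≤ ∑ y ∈ E with ¬c * Q y < P y, c * Q y :=
          sum_le_sum fun y hy => not_lt.1 (mem_filter.1 hy).2
      _ = c * ∑ y ∈ E with ¬c * Q y < P y, Q y := (mul_sum _ _ _).symm
      _ ≤ c * ∑ y ∈ E, Q y :=
          mul_le_mul_of_nonneg_left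
            (sum_le_sum_of_subset_of_nonneg (filter_subset _ _) fun y hy _ => hQ y hy) hc
  rw [← sum_filter_add_sum_filter_not E (fun y => c * Q y < P y)]
  linarith

lemma mul_exp_le_mul_div_rpow {α t p q : ℝ} (hα : 1 ≤ α) (hp : 0 < p) (hq : 0 < q)
    (h : exp t * q ≤ p) : p * exp ((α - 1) * t) ≤ q * (p / q) ^ α := by
  have hratio : exp t ≤ p / q := (le_div_iff₀ hq).2 h
  have hpq : 0 < p / q := div_pos hp hq
  calc p * exp ((α - 1) * t) = p * exp t ^ (α - 1) := by rw [mul_comm (α - 1), exp_mul]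
    _ ≤ p * (p / q) ^ (α - 1) :=
        mul_le_mul_of_nonneg_left
          (rpow_le_rpow (exp_pos t).le hratio (sub_nonneg.2 hα)) hp.le
    _ = q * (p / q) ^ α := by
        rw [rpow_sub_one hpq.ne']
        field_simp

variable [Fintype Y]

lemma sum_mul_rpow_le_exp_of_renyiDiv_le {α ε : ℝ} (hα : 1 < α) {P Q : Y → ℝ}
    (h : renyiDiv α P Q ≤ ε) : ∑ y, Q y * (P y / Q y) ^ α ≤ exp ((α - 1) * ε) := by
  unfold renyiDiv at h
  rw [inv_mul_le_iff₀ (sub_pos.2 hα)] at h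
  exact (le_exp_log _).trans (exp_le_exp.2 h)

lemma sum_le_exp_of_renyiDiv_le {α ε t : ℝ} (hα : 1 < α) {P Q : Y → ℝ}
    (hP : ∀ y, 0 < P y) (hQ : ∀ y, 0 < Q y) (h : renyiDiv α P Q ≤ ε)
    (S : Finset Y) (hS : ∀ y ∈ S, exp t * Q y ≤ P y) :
    ∑ y ∈ S, P y ≤ exp ((α - 1) * (ε - t)) := by
  have hmarkov : (∑ y ∈ S, P y) * exp ((α - 1) * t) ≤ ∑ y, Q y * (P y / Q y) ^ α :=
    calc (∑ y ∈ S, P y) * exp ((α - 1) * t)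
        = ∑ y ∈ S, P y * exp ((α - 1) * t) := sum_mul _ _ _
      _ ≤ ∑ y ∈ S, Q y * (P y / Q y) ^ α :=
          sum_le_sum fun y hy => mul_exp_le_mul_div_rpow hα.le (hP y) (hQ y) (hS y hy)
      _ ≤ ∑ y, Q y * (P y / Q y) ^ α :=
          sum_le_sum_of_subset_of_nonneg (subset_univ S) fun y _ _ =>
            mul_nonneg (hQ y).le (rpow_nonneg (div_pos (hP y) (hQ y)).le α)
  rw [mul_sub, exp_sub, le_div_iff₀ (exp_pos _)]
  exact hmarkov.trans (sum_mul_rpow_le_exp_of_renyiDiv_le hα h)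

end

theorem stmt_6_general {T Y : Type*} [Fintype Y]
    (Adj : T → T → Prop)
    (M : T → Y → ℝ) (α ε : ℝ) (hα : 1 < α)
    (hpos : ∀ D y, 0 < M D y)
    (hRDP : ∀ D D', Adj D D' → renyiDiv α (M D) (M D') ≤ ε) :
    ∀ δ : ℝ, 0 < δ → δ < 1 → ∀ D D', Adj D D' → ∀ E : Finset Y,
      ∑ y ∈ E, M D y ≤
        Real.exp (ε + Real.log (1 / δ) / (α - 1)) * ∑ y ∈ E, M D' y + δ := by
  intro δ hδ _ D D' hAdj E
  set t := ε + log (1 / δ) / (α - 1)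
  have hexponent : (α - 1) * (ε - t) = log δ := by
    have : α - 1 ≠ 0 := (sub_pos.2 hα).ne'
    simp only [t, one_div, log_inv]
    field_simp
    ring
  have htail : ∑ y ∈ E with exp t * M D' y < M D y, M D y ≤ δ := by
    calc _ ≤ exp ((α - 1) * (ε - t)) :=
          sum_le_exp_of_renyiDiv_le hα (hpos D) (hpos D') (hRDP D D' hAdj) _
            fun y hy => (mem_filter.1 hy).2.le
      _ = δ := by rw [hexponent, exp_log hδ]
  have hsplit := sum_le_mul_sum_add_sum_filter_lt E (P := M D) (exp_pos t).le
    fun y _ => (hpos D' y).le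
  linarith

/-- RDP-to-DP conversion: if `M` is `(α, ε)`-RDP for some `α > 1`, then for any
`δ ∈ (0,1)`, `M` is `(ε + log(1/δ)/(α-1), δ)`-DP. -/
theorem stmt_6 {T Y : Type*} [Fintype Y]
    (Adj : T → T → Prop)
    (M : T → Y → ℝ) (α ε : ℝ) (hα : 1 < α)
    (hpos : ∀ D y, 0 < M D y)
    (hpmf : ∀ D, ∑ y, M D y = 1)
    (hRDP : ∀ D D', Adj D D' → renyiDiv α (M D) (M D') ≤ ε) :
    ∀ δ : ℝ, 0 < δ → δ < 1 → ∀ D D', Adj D D' → ∀ E : Finset Y,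
      ∑ y ∈ E, M D y ≤
        Real.exp (ε + Real.log (1 / δ) / (α - 1)) * ∑ y ∈ E, M D' y + δ :=
  stmt_6_general Adj M α ε hα hpos hRDP
end

section
/- Utility of the exponential mechanism: for the exponential mechanism EM_q with sensitivity Δ over a finite outcome set Y, for every dataset D and t > 0, Pr[ q(D, EM_q(D)) ≤ max_y q(D,y) − (2Δ/ε)(log|Y| + t) ] ≤ e^{−t}. -/
/-- Utility of the exponential mechanism: the probability that the sampled outcome's
utility falls below `max_y q(D,y) - (2Δ/ε)(log|Y| + t)` is at most `e^{-t}`. -/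
theorem stmt_14 {T Y : Type*} [Fintype Y] [Nonempty Y]
    (q : T → Y → ℝ) (ε Δ : ℝ) (hε : 0 < ε) (hΔ : 0 < Δ)
    (EM : T → Y → ℝ)
    (hEM : ∀ D y, EM D y =
      Real.exp (ε * q D y / (2 * Δ)) / ∑ y', Real.exp (ε * q D y' / (2 * Δ))) :
    ∀ (D : T) (t : ℝ), 0 < t →
      ∑ y, (if q D y ≤ (Finset.univ.sup' Finset.univ_nonempty (q D)) -
              (2 * Δ / ε) * (Real.log (Fintype.card Y) + t)
            then EM D y else 0) ≤ Real.exp (-t) := by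
  intro D t ht
  have hΔ2 : (0:ℝ) < 2 * Δ := by linarith
  set M := Finset.univ.sup' (Finset.univ_nonempty (α := Y)) (q D) with hM
  set L := Real.log (Fintype.card Y) with hL
  set S := ∑ y', Real.exp (ε * q D y' / (2 * Δ)) with hS
  have hSpos : 0 < S := Finset.sum_pos (fun y _ => Real.exp_pos _) Finset.univ_nonempty
  have hSM : Real.exp (ε * M / (2 * Δ)) ≤ S := by
    obtain ⟨y0, -, hy0⟩ := Finset.exists_mem_eq_sup' (Finset.univ_nonempty (α := Y)) (q D)
    rw [hM, hy0]
    exact Finset.single_le_sum (f := fun y => Real.exp (ε * q D y / (2 * Δ)))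
      (fun y _ => (Real.exp_pos _).le) (Finset.mem_univ y0)
  have key : ∀ y : Y, (if q D y ≤ M - (2 * Δ / ε) * (L + t) then EM D y else 0)
      ≤ Real.exp (-(L + t)) := by
    intro y
    split_ifs with h
    · rw [hEM, ← hS]
      have h1 : ε * q D y ≤ ε * M - 2 * Δ * (L + t) := by
        have h2 := mul_le_mul_of_nonneg_left h hε.le
        have h3 : ε * (M - 2 * Δ / ε * (L + t)) = ε * M - 2 * Δ * (L + t) := by
          field_simp
        linarith [h2, h3.ge, h3.le]
      have h4 : ε * q D y / (2 * Δ) ≤ ε * M / (2 * Δ) - (L + t) := by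
        rw [div_le_iff₀ hΔ2]
        have : (ε * M / (2 * Δ) - (L + t)) * (2 * Δ) = ε * M - 2 * Δ * (L + t) := by
          field_simp
        linarith [this.ge]
      rw [div_le_iff₀ hSpos]
      calc Real.exp (ε * q D y / (2 * Δ))
          ≤ Real.exp (ε * M / (2 * Δ) - (L + t)) := Real.exp_le_exp.2 h4
        _ = Real.exp (ε * M / (2 * Δ)) * Real.exp (-(L + t)) := by
            rw [← Real.exp_add]; ring_nf
        _ ≤ S * Real.exp (-(L + t)) :=
            mul_le_mul_of_nonneg_right hSM (Real.exp_pos _).le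
        _ = Real.exp (-(L + t)) * S := mul_comm _ _
    · exact (Real.exp_pos _).le
  have hcard : (0:ℝ) < Fintype.card Y := by exact_mod_cast Fintype.card_pos
  calc ∑ y, (if q D y ≤ M - (2 * Δ / ε) * (L + t) then EM D y else 0)
      ≤ ∑ _y : Y, Real.exp (-(L + t)) := Finset.sum_le_sum (fun y _ => key y)
    _ = (Fintype.card Y : ℝ) * Real.exp (-(L + t)) := by
        rw [Finset.sum_const, Finset.card_univ, nsmul_eq_mul]
    _ = Real.exp (-t) := by
        rw [hL, show -(Real.log (Fintype.card Y) + t) = -Real.log (Fintype.card Y) + -t by ring,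
          Real.exp_add, Real.exp_neg, Real.exp_log hcard]
        field_simp
end

section
/- Privacy amplification by Poisson subsampling for approximate DP: if M is (ε, δ)-DP, then the mechanism that first includes each record of D independently with probability q and then runs M on the subsample is (log(1 + q(e^{ε} − 1)), qδ)-DP under add/remove adjacency. -/
private lemma weight_sum {I : Type*} [DecidableEq I] (q : ℝ) (D : Finset I) :
    ∑ S ∈ D.powerset, q ^ S.card * (1 - q) ^ (D.card - S.card) = 1 := by
  have h := Finset.prod_add (fun _ : I => q) (fun _ : I => (1 - q)) D
  simp only [Finset.prod_const] at h
  have h2 : ∀ S ∈ D.powerset, q ^ S.card * (1 - q) ^ (D.card - S.card)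
      = q ^ S.card * (1 - q) ^ (D \ S).card := by
    intro S hS
    rw [Finset.card_sdiff_of_subset (Finset.mem_powerset.mp hS)]
  rw [Finset.sum_congr rfl h2, ← h]
  norm_num

private lemma aux_ineq (u q δ A B : ℝ) (hu : 1 ≤ u) (hq0 : 0 < q) (hq1 : q ≤ 1)
    (hδ : 0 ≤ δ) (hA : 0 ≤ A) (hB : 0 ≤ B)
    (hBA : B ≤ u * A + δ) (hAB : A ≤ u * B + δ) :
    ((1 - q) * A + q * B ≤ (1 + q * (u - 1)) * A + q * δ) ∧
    (A ≤ (1 + q * (u - 1)) * ((1 - q) * A + q * B) + q * δ) := by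
  have hq1' : 0 ≤ 1 - q := by linarith
  have hu0 : 0 < u := by linarith
  constructor
  · nlinarith [mul_nonneg hq0.le hA]
  · nlinarith [mul_nonneg (mul_nonneg (mul_nonneg hq0.le hq1') hA) (sq_nonneg (u - 1)),
      mul_nonneg (mul_nonneg (mul_nonneg hq0.le hδ) hq1') (sub_nonneg.2 hu),
      mul_nonneg (mul_nonneg hq0.le (by nlinarith : (0:ℝ) ≤ 1 + q * (u - 1)))
        (by linarith : 0 ≤ u * B + δ - A)]

/-- Privacy amplification by Poisson subsampling: if `M` is `(ε,δ)`-DP under add/remove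
adjacency, then running `M` on a Poisson subsample (each record kept independently with
probability `q`) is `(log(1 + q(e^ε - 1)), qδ)`-DP. -/
theorem stmt_15 {I Y : Type*} [DecidableEq I] [Fintype Y]
    (ε δ q : ℝ) (hε : 0 ≤ ε) (hδ : 0 ≤ δ) (hq0 : 0 < q) (hq1 : q ≤ 1)
    (M : Finset I → Y → ℝ)
    (hnn : ∀ D y, 0 ≤ M D y) (hpmf : ∀ D, ∑ y, M D y = 1)
    (hDP : ∀ (D : Finset I) (i : I), i ∉ D → ∀ E : Finset Y,
      (∑ y ∈ E, M (insert i D) y ≤ Real.exp ε * ∑ y ∈ E, M D y + δ) ∧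
      (∑ y ∈ E, M D y ≤ Real.exp ε * ∑ y ∈ E, M (insert i D) y + δ))
    (Sub : Finset I → Y → ℝ)
    (hSub : ∀ D y, Sub D y =
      ∑ S ∈ D.powerset, q ^ S.card * (1 - q) ^ (D.card - S.card) * M S y) :
    ∀ (D : Finset I) (i : I), i ∉ D → ∀ E : Finset Y,
      (∑ y ∈ E, Sub (insert i D) y ≤
        Real.exp (Real.log (1 + q * (Real.exp ε - 1))) * ∑ y ∈ E, Sub D y + q * δ) ∧
      (∑ y ∈ E, Sub D y ≤
        Real.exp (Real.log (1 + q * (Real.exp ε - 1))) * ∑ y ∈ E, Sub (insert i D) y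
          + q * δ) := by
  intro D i hi E
  set u := Real.exp ε with hu
  have hu1 : 1 ≤ u := Real.one_le_exp hε
  have hq1' : (0:ℝ) ≤ 1 - q := by linarith
  have hcpos : (0:ℝ) < 1 + q * (u - 1) := by nlinarith
  have hc : Real.exp (Real.log (1 + q * (u - 1))) = 1 + q * (u - 1) := Real.exp_log hcpos
  -- swap sums
  have hswap : ∀ D' : Finset I, ∑ y ∈ E, Sub D' y =
      ∑ S ∈ D'.powerset, q ^ S.card * (1 - q) ^ (D'.card - S.card) * ∑ y ∈ E, M S y := by
    intro D'
    simp only [hSub]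
    rw [Finset.sum_comm]
    exact Finset.sum_congr rfl fun S _ => (Finset.mul_sum _ _ _).symm
  have hins : ∀ S ∈ D.powerset, i ∉ S := fun S hS h => hi (Finset.mem_powerset.mp hS h)
  have hw : ∀ S ∈ D.powerset, (0:ℝ) ≤ q ^ S.card * (1 - q) ^ (D.card - S.card) :=
    fun S _ => mul_nonneg (pow_nonneg hq0.le _) (pow_nonneg hq1' _)
  set A := ∑ S ∈ D.powerset, q ^ S.card * (1 - q) ^ (D.card - S.card) * ∑ y ∈ E, M S y with hAdef
  set B := ∑ S ∈ D.powerset, q ^ S.card * (1 - q) ^ (D.card - S.card) *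
      ∑ y ∈ E, M (insert i S) y with hBdef
  have hDeq : ∑ y ∈ E, Sub D y = A := hswap D
  have hkey : ∑ y ∈ E, Sub (insert i D) y = (1 - q) * A + q * B := by
    rw [hswap (insert i D), Finset.sum_powerset_insert hi, hAdef, hBdef,
      Finset.mul_sum, Finset.mul_sum]
    congr 1
    · refine Finset.sum_congr rfl fun S hS => ?_
      have hle : S.card ≤ D.card := Finset.card_le_card (Finset.mem_powerset.mp hS)
      rw [Finset.card_insert_of_notMem hi]
      have : D.card + 1 - S.card = (D.card - S.card) + 1 := by omega
      rw [this, pow_succ]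
      ring
    · refine Finset.sum_congr rfl fun S hS => ?_
      have hle : S.card ≤ D.card := Finset.card_le_card (Finset.mem_powerset.mp hS)
      rw [Finset.card_insert_of_notMem hi, Finset.card_insert_of_notMem (hins S hS)]
      have : D.card + 1 - (S.card + 1) = D.card - S.card := by omega
      rw [this, pow_succ]
      ring
  have hA0 : 0 ≤ A :=
    Finset.sum_nonneg fun S hS =>
      mul_nonneg (hw S hS) (Finset.sum_nonneg fun y _ => hnn S y)
  have hB0 : 0 ≤ B :=
    Finset.sum_nonneg fun S hS =>
      mul_nonneg (hw S hS) (Finset.sum_nonneg fun y _ => hnn (insert i S) y)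
  have hwsum := weight_sum (I := I) q D
  have hBA : B ≤ u * A + δ := by
    calc B ≤ ∑ S ∈ D.powerset, q ^ S.card * (1 - q) ^ (D.card - S.card) *
        (u * (∑ y ∈ E, M S y) + δ) :=
          Finset.sum_le_sum fun S hS =>
            mul_le_mul_of_nonneg_left ((hDP S i (hins S hS) E).1) (hw S hS)
      _ = u * A + δ := by
          simp only [mul_add, Finset.sum_add_distrib, hAdef]
          rw [← Finset.sum_mul, hwsum, Finset.mul_sum]
          simp only [one_mul]
          congr 1
          exact Finset.sum_congr rfl fun S _ => by ring
  have hAB : A ≤ u * B + δ := by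
    calc A ≤ ∑ S ∈ D.powerset, q ^ S.card * (1 - q) ^ (D.card - S.card) *
        (u * (∑ y ∈ E, M (insert i S) y) + δ) :=
          Finset.sum_le_sum fun S hS =>
            mul_le_mul_of_nonneg_left ((hDP S i (hins S hS) E).2) (hw S hS)
      _ = u * B + δ := by
          simp only [mul_add, Finset.sum_add_distrib, hBdef]
          rw [← Finset.sum_mul, hwsum, Finset.mul_sum]
          simp only [one_mul]
          congr 1
          exact Finset.sum_congr rfl fun S _ => by ring
  have haux := aux_ineq u q δ A B hu1 hq0 hq1 hδ hA0 hB0 hBA hAB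
  rw [hkey, hDeq, hc]
  exact haux
end
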